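/- Suppose d = 3 and variable 3 duplicates variable 1, i.e., x_{i3} = x_{i1} for all i ∈ {1,…,n} (with 𝒳_3 = 𝒳_1). Then the global uniqueness Shapley value of variable 1 satisfies φ^{1:n}_1 = (1/3)·𝓗({1}) + (1/6)·𝓗({1}|{2}). -/

import Mathlib

open Finset

variable {n d : ℕ} {X : Fin d → Type} [∀ j, Fintype (X j)] [∀ j, DecidableEq (X j)]

/-- Number of subjects matching subject `t` on every variable in `u`. -/
def cohortN (x : Fin n → ∀ j, X j) (t : Fin n) (u : Finset (Fin d)) : ℕ :=
  (Finset.univ.filter fun i => ∀ j ∈ u, x i j = x t j).card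

/-- Value function `val_t(u) = -log₂(N_t(u)/n)`. -/
noncomputable def uVal (x : Fin n → ∀ j, X j) (t : Fin n) (u : Finset (Fin d)) : ℝ :=
  -Real.logb 2 ((cohortN x t u : ℝ) / n)

/-- Uniqueness Shapley value of variable `j` for subject `t`. -/
noncomputable def uShap (x : Fin n → ∀ j, X j) (t : Fin n) (j : Fin d) : ℝ :=
  (d : ℝ)⁻¹ * ∑ u ∈ ((Finset.univ : Finset (Fin d)).erase j).powerset,
    ((d - 1).choose u.card : ℝ)⁻¹ * (uVal x t (insert j u) - uVal x t u)

/-- Global uniqueness Shapley value. -/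
noncomputable def uShapGlobal (x : Fin n → ∀ j, X j) (j : Fin d) : ℝ :=
  (n : ℝ)⁻¹ * ∑ t, uShap x t j

/-- Marginal empirical probability of observing `z` on the variables in `u`. -/
noncomputable def margP (x : Fin n → ∀ j, X j) (u : Finset (Fin d))
    (z : ∀ j : u, X j.1) : ℝ :=
  ((Finset.univ.filter fun i : Fin n => ∀ j : u, x i j.1 = z j).card : ℝ) / n

/-- Empirical entropy of the variables in `u` (convention `0·log₂ 0 = 0` holds automatically). -/
noncomputable def emEnt (x : Fin n → ∀ j, X j) (u : Finset (Fin d)) : ℝ :=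
  -∑ z : (∀ j : u, X j.1), margP x u z * Real.logb 2 (margP x u z)

/-! Since variable 3 copies variable 1, a coalition containing variable 3 has the same cohorts as
the one with variable 3 replaced by variable 1. Hence the marginal contributions of variable 1 to
the coalitions {3} and {2, 3} vanish, and only ∅ and {2} remain, with Shapley weights 1/3 and 1/6.
Averaging over subjects turns `val_t(u)` into `𝓗(u)`: the empirical entropy is the mean of the
self-information `-log₂ p_u(x_{t,u})`, since each value `z` is taken by `n p_u(z)` subjects. -/

theorem sum_logb_card_fiber {ι α : Type*} [Fintype ι] [Fintype α] [DecidableEq α]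
    (g : ι → α) (c : ℝ) :
    ∑ t, Real.logb 2 ((univ.filter fun i => g i = g t).card / c)
      = ∑ z, ((univ.filter fun i => g i = z).card : ℝ)
          * Real.logb 2 ((univ.filter fun i => g i = z).card / c) := by
  rw [← sum_fiberwise univ g]
  refine sum_congr rfl fun z _ => ?_
  rw [sum_congr rfl fun t ht => by rw [(mem_filter.mp ht).2], sum_const, nsmul_eq_mul]

theorem inv_mul_sum_uVal (x : Fin n → ∀ j, X j) (u : Finset (Fin d)) :
    (n : ℝ)⁻¹ * ∑ t, uVal x t u = emEnt x u := by
  let g : Fin n → (∀ j : u, X j.1) := fun t j => x t j.1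
  have hcohort : ∀ t, cohortN x t u = (univ.filter fun i => g i = g t).card := fun t => by
    simp [cohortN, g, funext_iff]
  have hmarg : ∀ z, margP x u z = ((univ.filter fun i => g i = z).card : ℝ) / n := fun z => by
    simp [margP, g, funext_iff]
  simp only [uVal, emEnt, hcohort, hmarg, sum_neg_distrib, sum_logb_card_fiber g, mul_neg,
    mul_sum]
  exact congrArg Neg.neg (sum_congr rfl fun z _ => by ring)

theorem uVal_congr {X : Fin d → Type} [∀ j, DecidableEq (X j)] (x : Fin n → ∀ j, X j)
    (t : Fin n) {u v : Finset (Fin d)}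
    (h : ∀ i, (∀ j ∈ u, x i j = x t j) ↔ (∀ j ∈ v, x i j = x t j)) :
    uVal x t u = uVal x t v := by
  simp only [uVal, cohortN, filter_congr fun i _ => h i]

theorem uVal_empty {X : Fin d → Type} [∀ j, DecidableEq (X j)] (x : Fin n → ∀ j, X j)
    (t : Fin n) : uVal x t ∅ = 0 := by
  have hn : (n : ℝ) ≠ 0 := Nat.cast_ne_zero.mpr (Fin.pos t).ne'
  simp [uVal, cohortN, hn]

theorem uShap_fin_three_zero {X : Fin 3 → Type} [∀ j, DecidableEq (X j)]
    (x : Fin n → ∀ j, X j) (t : Fin n) :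
    uShap x t 0 = 3⁻¹ * (uVal x t {0} - uVal x t ∅)
      + 6⁻¹ * (uVal x t {0, 1} - uVal x t {1}) + 6⁻¹ * (uVal x t {0, 2} - uVal x t {2})
      + 3⁻¹ * (uVal x t {0, 1, 2} - uVal x t {1, 2}) := by
  have hsubsets : (univ.erase (0 : Fin 3)).powerset = {∅, {1}, {2}, {1, 2}} := by decide
  rw [uShap, hsubsets, sum_insert (by decide), sum_insert (by decide), sum_insert (by decide),
    sum_singleton]
  simp only [insert_empty, card_empty, card_singleton, Nat.choose_zero_right]
  rw [card_pair (by decide)]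
  norm_num
  ring

theorem globalUniquenessShapley_duplicate_var1_general
    (n : ℕ)
    (X : Fin 3 → Type) [∀ j, Fintype (X j)] [∀ j, DecidableEq (X j)]
    (hX : X 2 = X 0)
    (x : Fin n → ∀ j, X j)
    (hdup : ∀ i, x i 2 = cast hX.symm (x i 0)) :
    uShapGlobal x 0
      = (1 / 3) * emEnt x {0} + (1 / 6) * (emEnt x {0, 1} - emEnt x {1}) := by
  have hagree : ∀ i t, x i 2 = x t 2 ↔ x i 0 = x t 0 := fun i t => by
    rw [hdup i, hdup t, cast_inj]
  have hshap : ∀ t, uShap x t 0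
      = 3⁻¹ * uVal x t {0} + 6⁻¹ * (uVal x t {0, 1} - uVal x t {1}) := fun t => by
    rw [uShap_fin_three_zero, uVal_empty,
      uVal_congr x t (u := {2}) (v := {0}) (by simp [hagree]),
      uVal_congr x t (u := {0, 2}) (v := {0}) (by simp [hagree]),
      uVal_congr x t (u := {1, 2}) (v := {0, 1}) (by simp [hagree, and_comm]),
      uVal_congr x t (u := {0, 1, 2}) (v := {0, 1}) (by simp +contextual [hagree])]
    ring
  simp only [uShapGlobal, hshap, ← inv_mul_sum_uVal x, sum_add_distrib, sum_sub_distrib,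
    ← mul_sum]
  ring

/-- with `d = 3` and variable `3` (index `2`) duplicating variable `1`
(index `0`), i.e. `𝒳_3 = 𝒳_1` and `x_{i3} = x_{i1}` for all `i`, the global uniqueness
Shapley value of variable `1` is `(1/3)𝓗({1}) + (1/6)𝓗({1}|{2})`. -/
theorem globalUniquenessShapley_duplicate_var1
    (n : ℕ) (hn : 1 ≤ n)
    (X : Fin 3 → Type) [∀ j, Fintype (X j)] [∀ j, DecidableEq (X j)]
    (hX : X 2 = X 0)
    (x : Fin n → ∀ j, X j)
    (hdup : ∀ i, x i 2 = cast hX.symm (x i 0)) :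
    uShapGlobal x 0
      = (1 / 3) * emEnt x {0} + (1 / 6) * (emEnt x {0, 1} - emEnt x {1}) :=
  globalUniquenessShapley_duplicate_var1_general n X hX x hdup
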